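/- arXiv:1702.01960 — 2 statements merged into one kernel-verified Lean document; each statement's English description precedes it below -/
import Mathlib

section
/- For every real a > 0 and complex λ, μ with 0 < Re(μ) < Re(λ), the integral ∫₀^∞ x^{μ-1} (x + a + √(x² + 2ax))^{-λ} dx equals 2λ a^{-λ} (a/2)^μ Γ(2μ) Γ(λ - μ) / Γ(1 + λ + μ). -/
open MeasureTheory Complex

/-!
Substitute `x = a(1 - s)² / (2s)`, a bijection `(0, 1) → (0, ∞)` with inverse
`s = a / (x + a + √(x² + 2ax))`: indeed `x² + 2ax = (a(1 - s²) / (2s))²`, so the base of the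
`λ`-th power becomes `a / s`. The integral turns into
`(a/2)^μ a^(-λ) ∫₀¹ s^(λ-μ-1) (1-s)^(2μ-1) (1+s) ds = (a/2)^μ a^(-λ) (B(λ-μ, 2μ) + B(λ-μ+1, 2μ))`,
and `Γ(p + 1) = p Γ(p)` collapses the two Beta values into `2λ Γ(λ-μ) Γ(2μ) / Γ(1+λ+μ)`.
-/

namespace Complex

theorem ofReal_cpow_eq_exp_log {r : ℝ} (hr : 0 < r) (w : ℂ) :
    (r : ℂ) ^ w = exp (Real.log r * w) := by
  rw [cpow_def_of_ne_zero (ofReal_ne_zero.2 hr.ne'), ofReal_log hr.le]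

theorem ofReal_eq_exp_log {r : ℝ} (hr : 0 < r) : (r : ℂ) = exp (Real.log r) := by
  simpa using ofReal_cpow_eq_exp_log hr 1

theorem betaIntegral_eq_setIntegral_Ioo (u v : ℂ) :
    betaIntegral u v = ∫ x in Set.Ioo (0 : ℝ) 1, (x : ℂ) ^ (u - 1) * (1 - (x : ℂ)) ^ (v - 1) := by
  rw [betaIntegral, intervalIntegral.integral_of_le zero_le_one, integral_Ioc_eq_integral_Ioo]

theorem setIntegral_Ioo_cpow_mul_one_sub_cpow_mul_one_add {p q : ℂ} (hp : 0 < p.re)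
    (hq : 0 < q.re) :
    ∫ x in Set.Ioo (0 : ℝ) 1, (x : ℂ) ^ (p - 1) * (1 - (x : ℂ)) ^ (q - 1) * (1 + x) =
      (2 * p + q) * Gamma p * Gamma q / Gamma (p + q + 1) := by
  have hp1 : 0 < (p + 1).re := by rw [add_re, one_re]; linarith
  have hpq : 0 < (p + q).re := by rw [add_re]; linarith
  have hpq0 : p + q ≠ 0 := fun h => by simp [h] at hpq
  have hp0 : p ≠ 0 := fun h => by simp [h] at hp
  have hsplit : Set.EqOn (fun x : ℝ => (x : ℂ) ^ (p - 1) * (1 - (x : ℂ)) ^ (q - 1) * (1 + x))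
      (fun x : ℝ => (x : ℂ) ^ (p - 1) * (1 - (x : ℂ)) ^ (q - 1) +
        (x : ℂ) ^ (p + 1 - 1) * (1 - (x : ℂ)) ^ (q - 1)) (Set.Ioo 0 1) := by
    intro x hx
    have hxp : (x : ℂ) ^ p = (x : ℂ) ^ (p - 1) * x := by
      simpa using cpow_add (p - 1) 1 (ofReal_ne_zero.2 hx.1.ne')
    simp only [add_sub_cancel_right, hxp]
    ring
  rw [setIntegral_congr_fun measurableSet_Ioo hsplit, integral_add
      ((betaIntegral_convergent hp hq).1.mono_set Set.Ioo_subset_Ioc_self)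
      ((betaIntegral_convergent hp1 hq).1.mono_set Set.Ioo_subset_Ioc_self),
    ← betaIntegral_eq_setIntegral_Ioo, ← betaIntegral_eq_setIntegral_Ioo,
    betaIntegral_eq_Gamma_mul_div _ _ hp hq, betaIntegral_eq_Gamma_mul_div _ _ hp1 hq,
    add_right_comm, Gamma_add_one _ hpq0, Gamma_add_one _ hp0]
  have := Gamma_ne_zero_of_re_pos hpq
  field_simp
  ring

end Complex

namespace Oberhettinger

noncomputable def subst (a s : ℝ) : ℝ := a * (1 - s) ^ 2 / (2 * s)

noncomputable def substInv (a x : ℝ) : ℝ := a / (x + a + √(x ^ 2 + 2 * a * x))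

variable {a : ℝ}

theorem sqrt_subst_sq_add (ha : 0 ≤ a) {s : ℝ} (hs : s ∈ Set.Ioo (0 : ℝ) 1) :
    √(subst a s ^ 2 + 2 * a * subst a s) = a * (1 - s ^ 2) / (2 * s) := by
  obtain ⟨hs0, hs1⟩ := hs
  have hsq : subst a s ^ 2 + 2 * a * subst a s = (a * (1 - s ^ 2) / (2 * s)) ^ 2 := by
    unfold subst
    field_simp
    ring
  rw [hsq, Real.sqrt_sq]
  have : 0 ≤ 1 - s ^ 2 := by nlinarith
  positivity

theorem subst_add_add_sqrt (ha : 0 ≤ a) {s : ℝ} (hs : s ∈ Set.Ioo (0 : ℝ) 1) :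
    subst a s + a + √(subst a s ^ 2 + 2 * a * subst a s) = a / s := by
  rw [sqrt_subst_sq_add ha hs, subst]
  field_simp [hs.1.ne']
  ring

theorem mapsTo_subst (ha : 0 < a) : Set.MapsTo (subst a) (Set.Ioo 0 1) (Set.Ioi 0) := by
  rintro s ⟨hs0, hs1⟩
  have : 0 < 1 - s := by linarith
  exact Set.mem_Ioi.2 (by unfold subst; positivity)

theorem lt_add_add_sqrt {x : ℝ} (hx : 0 < x) : a < x + a + √(x ^ 2 + 2 * a * x) := by
  linarith [Real.sqrt_nonneg (x ^ 2 + 2 * a * x)]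

theorem mapsTo_substInv (ha : 0 < a) : Set.MapsTo (substInv a) (Set.Ioi 0) (Set.Ioo 0 1) := by
  intro x (hx : 0 < x)
  have hlt := lt_add_add_sqrt (a := a) hx
  exact ⟨div_pos ha (ha.trans hlt), (div_lt_one (ha.trans hlt)).2 hlt⟩

theorem invOn_substInv (ha : 0 < a) :
    Set.InvOn (substInv a) (subst a) (Set.Ioo 0 1) (Set.Ioi 0) := by
  refine ⟨fun s hs => ?_, fun x hx => ?_⟩
  · rw [substInv, subst_add_add_sqrt ha.le hs, div_div_cancel₀ ha.ne']
  · have hx : 0 < x := hx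
    have hw := Real.sq_sqrt (by positivity : 0 ≤ x ^ 2 + 2 * a * x)
    have hlt := lt_add_add_sqrt (a := a) hx
    rw [subst, substInv]
    set w := √(x ^ 2 + 2 * a * x)
    have : x + a + w ≠ 0 := (ha.trans hlt).ne'
    field_simp
    linear_combination hw

theorem bijOn_subst (ha : 0 < a) : Set.BijOn (subst a) (Set.Ioo 0 1) (Set.Ioi 0) :=
  (invOn_substInv ha).bijOn (mapsTo_subst ha) (mapsTo_substInv ha)

theorem hasDerivAt_subst {s : ℝ} (hs : s ≠ 0) :
    HasDerivAt (subst a) (-(a * (1 - s ^ 2) / (2 * s ^ 2))) s := by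
  refine ((((hasDerivAt_id' s).const_sub 1).pow 2 |>.const_mul a).div
    ((hasDerivAt_id' s).const_mul 2) (mul_ne_zero two_ne_zero hs)).congr_deriv ?_
  simp only [Pi.pow_apply]
  field_simp
  ring

theorem abs_deriv_smul_integrand_subst (ha : 0 < a) (l m : ℂ) {s : ℝ}
    (hs : s ∈ Set.Ioo (0 : ℝ) 1) :
    |-(a * (1 - s ^ 2) / (2 * s ^ 2))| • ((subst a s : ℂ) ^ (m - 1) * ((a / s : ℝ) : ℂ) ^ (-l)) =
      ((a : ℂ) / 2) ^ m * (a : ℂ) ^ (-l) *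
        ((s : ℂ) ^ (l - m - 1) * (1 - (s : ℂ)) ^ (2 * m - 1) * (1 + s)) := by
  obtain ⟨hs0, hs1⟩ := hs
  have h1s : 0 < 1 - s := by linarith
  have ha2 : 0 < a / 2 := by positivity
  have habs : |-(a * (1 - s ^ 2) / (2 * s ^ 2))| = a / 2 * (1 - s) / s ^ 2 * (1 + s) := by
    have : 0 < 1 - s ^ 2 := by nlinarith
    rw [abs_neg, abs_of_pos (by positivity)]
    field_simp
    ring
  -- on positive bases `cpow` is `exp (log · w)`, so the identity is one between logarithms
  have hlog : Real.log (a / 2 * (1 - s) / s ^ 2) + Real.log (subst a s) * (m - 1) +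
      Real.log (a / s) * -l = Real.log (a / 2) * m + Real.log a * -l +
        (Real.log s * (l - m - 1) + Real.log (1 - s) * (2 * m - 1)) := by
    rw [subst, show a * (1 - s) ^ 2 / (2 * s) = a / 2 * (1 - s) ^ 2 / s by ring,
      Real.log_div (by positivity) (by positivity), Real.log_div (by positivity) (by positivity),
      Real.log_div ha.ne' hs0.ne', Real.log_mul ha2.ne' h1s.ne',
      Real.log_mul ha2.ne' (by positivity), Real.log_pow, Real.log_pow]
    push_cast
    ring
  rw [habs, real_smul, ofReal_mul, ofReal_eq_exp_log (by positivity),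
    ofReal_cpow_eq_exp_log (by unfold subst; positivity), ofReal_cpow_eq_exp_log (by positivity),
    show (a : ℂ) / 2 = ((a / 2 : ℝ) : ℂ) by push_cast; rfl, ofReal_cpow_eq_exp_log ha2,
    ofReal_cpow_eq_exp_log ha, ofReal_cpow_eq_exp_log hs0,
    show 1 - (s : ℂ) = ((1 - s : ℝ) : ℂ) by push_cast; rfl, ofReal_cpow_eq_exp_log h1s]
  have := congrArg exp hlog
  simp only [exp_add] at this
  push_cast
  linear_combination (1 + (s : ℂ)) * this

end Oberhettinger

open Oberhettinger in
theorem oberhettinger_integral (a : ℝ) (ha : 0 < a) (l m : ℂ)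
    (hm : 0 < m.re) (hlm : m.re < l.re) :
    ∫ x in Set.Ioi (0 : ℝ),
        (x : ℂ) ^ (m - 1) *
          ((x + a + Real.sqrt (x ^ 2 + 2 * a * x) : ℝ) : ℂ) ^ (-l) =
      2 * l * (a : ℂ) ^ (-l) * ((a : ℂ) / 2) ^ m * Complex.Gamma (2 * m) *
        Complex.Gamma (l - m) / Complex.Gamma (1 + l + m) := by
  have hbij := bijOn_subst ha
  rw [← hbij.image_eq, integral_image_eq_integral_abs_deriv_smul measurableSet_Ioo
      (fun s hs => (hasDerivAt_subst hs.1.ne').hasDerivWithinAt) hbij.injOn,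
    setIntegral_congr_fun measurableSet_Ioo (g := fun s : ℝ => ((a : ℂ) / 2) ^ m * (a : ℂ) ^ (-l) *
        ((s : ℂ) ^ (l - m - 1) * (1 - (s : ℂ)) ^ (2 * m - 1) * (1 + s))) fun s hs => by
      rw [subst_add_add_sqrt ha.le hs]; exact abs_deriv_smul_integrand_subst ha l m hs,
    integral_const_mul, setIntegral_Ioo_cpow_mul_one_sub_cpow_mul_one_add
      (p := l - m) (q := 2 * m) (by rw [sub_re]; linarith) (by simpa using mul_pos two_pos hm)]
  rw [show l - m + 2 * m + 1 = 1 + l + m by ring]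
  ring
end

section
/- For every real a > 0 and complex λ, μ with 0 < Re(μ) < Re(λ), the function x ↦ x^{μ-1} (x + a + √(x² + 2ax))^{-λ} is (absolutely) integrable on (0, ∞). -/
/-!
The base `B x = x + a + √(x² + 2ax)` satisfies `B x ≥ a` and `B x ≥ x` for `x > 0`, and
`Re λ > 0`, so the integrand is bounded by `a ^ (-Re λ) x ^ (Re μ - 1)` on `(0, 1]` and by
`x ^ (Re μ - Re λ - 1)` on `(1, ∞)`; both majorants are integrable there.
-/

open MeasureTheory Complex Set

theorem integrableOn_Ioi_zero_of_norm_le_rpow {E : Type*} [NormedAddCommGroup E] {f : ℝ → E}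
    {p q C D : ℝ} (hp : -1 < p) (hq : q < -1) (hf : ContinuousOn f (Ioi 0))
    (h_zero : ∀ x ∈ Ioc (0 : ℝ) 1, ‖f x‖ ≤ C * x ^ p)
    (h_top : ∀ x ∈ Ioi (1 : ℝ), ‖f x‖ ≤ D * x ^ q) :
    IntegrableOn f (Ioi 0) := by
  rw [← Ioc_union_Ioi_eq_Ioi zero_le_one]
  refine IntegrableOn.union ?_ ?_
  · have h_int : IntegrableOn (fun x : ℝ => x ^ p) (Ioc 0 1) :=
      (intervalIntegrable_iff_integrableOn_Ioc_of_le zero_le_one).1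
        (intervalIntegral.intervalIntegrable_rpow' hp)
    exact (h_int.const_mul C).mono'
      ((hf.mono Ioc_subset_Ioi_self).aestronglyMeasurable measurableSet_Ioc)
      (ae_restrict_of_forall_mem measurableSet_Ioc h_zero)
  · have h_int : IntegrableOn (fun x : ℝ => x ^ q) (Ioi 1) :=
      integrableOn_Ioi_rpow_of_lt hq one_pos
    exact (h_int.const_mul D).mono'
      ((hf.mono (Ioi_subset_Ioi zero_le_one)).aestronglyMeasurable measurableSet_Ioi)
      (ae_restrict_of_forall_mem measurableSet_Ioi h_top)

theorem norm_ofReal_cpow_mul_ofReal_cpow {x y : ℝ} (hx : 0 < x) (hy : 0 < y) (s t : ℂ) :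
    ‖(x : ℂ) ^ s * (y : ℂ) ^ t‖ = x ^ s.re * y ^ t.re := by
  rw [norm_mul, norm_cpow_eq_rpow_re_of_pos hx, norm_cpow_eq_rpow_re_of_pos hy]

theorem integrableOn_Ioi_cpow_mul_cpow_of_le {g : ℝ → ℝ} {c : ℝ} {s t : ℂ} (hc : 0 < c)
    (hs : 0 < s.re) (hst : s.re < t.re) (hg : ContinuousOn g (Ioi 0))
    (hg_ge_const : ∀ x ∈ Ioi (0 : ℝ), c ≤ g x) (hg_ge_self : ∀ x ∈ Ioi (0 : ℝ), x ≤ g x) :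
    IntegrableOn (fun x : ℝ => (x : ℂ) ^ (s - 1) * (g x : ℂ) ^ (-t)) (Ioi 0) := by
  have hg_pos : ∀ x ∈ Ioi (0 : ℝ), 0 < g x := fun x hx => hc.trans_le (hg_ge_const x hx)
  have ht : -t.re ≤ 0 := by linarith
  refine integrableOn_Ioi_zero_of_norm_le_rpow (C := c ^ (-t.re)) (D := 1)
    (p := s.re - 1) (q := s.re - 1 - t.re) (by linarith) (by linarith) ?_ ?_ ?_
  · intro x hx
    exact ((continuousAt_ofReal_cpow_const x _ (Or.inr (ne_of_gt hx))).continuousWithinAt.mul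
      ((continuousAt_ofReal_cpow_const _ _ (Or.inr (hg_pos x hx).ne')).comp_continuousWithinAt
        (hg x hx)))
  · intro x hx
    rw [norm_ofReal_cpow_mul_ofReal_cpow hx.1 (hg_pos x hx.1), mul_comm (c ^ _)]
    simp only [sub_re, one_re, neg_re]
    exact mul_le_mul_of_nonneg_left (Real.rpow_le_rpow_of_nonpos hc (hg_ge_const x hx.1) ht)
      (Real.rpow_nonneg hx.1.le _)
  · intro x hx
    have hx0 : 0 < x := one_pos.trans hx
    rw [norm_ofReal_cpow_mul_ofReal_cpow hx0 (hg_pos x hx0)]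
    simp only [sub_re, one_re, neg_re]
    calc x ^ (s.re - 1) * g x ^ (-t.re)
        ≤ x ^ (s.re - 1) * x ^ (-t.re) :=
          mul_le_mul_of_nonneg_left (Real.rpow_le_rpow_of_nonpos hx0 (hg_ge_self x hx0) ht)
            (Real.rpow_nonneg hx0.le _)
      _ = 1 * x ^ (s.re - 1 - t.re) := by
          rw [one_mul, ← Real.rpow_add hx0, ← sub_eq_add_neg]

theorem oberhettinger_integrable (a : ℝ) (ha : 0 < a) (l m : ℂ)
    (hm : 0 < m.re) (hlm : m.re < l.re) :
    IntegrableOn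
      (fun x : ℝ =>
        (x : ℂ) ^ (m - 1) *
          ((x + a + Real.sqrt (x ^ 2 + 2 * a * x) : ℝ) : ℂ) ^ (-l))
      (Set.Ioi (0 : ℝ)) := by
  refine integrableOn_Ioi_cpow_mul_cpow_of_le (c := a) ha hm hlm
    (by fun_prop : Continuous fun x : ℝ => x + a + Real.sqrt (x ^ 2 + 2 * a * x)).continuousOn
    (fun x hx => ?_) (fun x hx => ?_) <;>
  linarith [Real.sqrt_nonneg (x ^ 2 + 2 * a * x), mem_Ioi.1 hx]
end
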